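/- The C-algebra Λ := C⟨x,y⟩/(xy+yx, x³-y²) is nine-dimensional as a C-vector space, with basis {1, y, x, y², yx, x², y²x, yx², y²x²}. -/

import Mathlib

open FreeAlgebra

/-- The relations defining Λ = C⟨x,y⟩/(xy+yx, x³-y²), with x = ι ℂ 0 and y = ι ℂ 1. -/
inductive LamRel : FreeAlgebra ℂ (Fin 2) → FreeAlgebra ℂ (Fin 2) → Prop
  | r1 : LamRel (ι ℂ 0 * ι ℂ 1 + ι ℂ 1 * ι ℂ 0) 0
  | r2 : LamRel ((ι ℂ 0) ^ 3 - (ι ℂ 1) ^ 2) 0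

noncomputable abbrev Lam := RingQuot LamRel

noncomputable abbrev lx : Lam := RingQuot.mkAlgHom ℂ LamRel (ι ℂ 0)
noncomputable abbrev ly : Lam := RingQuot.mkAlgHom ℂ LamRel (ι ℂ 1)

/-!
The nine monomials span `Λ` because their span contains `1` and, by the relations
`xy = -yx`, `x³ = y²` and `y³ = 0` (the last since `y³ = x³y = -yx³ = -y³`), is stable under left
multiplication by `x` and `y`. They are linearly independent because left multiplication by `x`
and `y` in these coordinates can be written down in advance as two endomorphisms of `ℂ⁹`; these
satisfy the defining relations, and the resulting representation of `Λ`, applied to `e₀`, sends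
the monomials to the standard basis.
-/

theorem Submodule.span_range_eq_top_of_one_mem_of_mul_mem {R A ι : Type*} [CommSemiring R]
    [Semiring A] [Algebra R A] {s : Set A} (hs : Algebra.adjoin R s = ⊤) (v : ι → A)
    (h1 : 1 ∈ span R (Set.range v)) (hmul : ∀ g ∈ s, ∀ i, g * v i ∈ span R (Set.range v)) :
    span R (Set.range v) = ⊤ := by
  set P := span R (Set.range v)
  have mul_mem (a : A) : ∀ p ∈ P, a * p ∈ P := by
    induction (hs ▸ Algebra.mem_top : a ∈ Algebra.adjoin R s) using Algebra.adjoin_induction with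
    | mem g hg =>
      intro p hp
      induction hp using span_induction with
      | mem q hq => obtain ⟨i, rfl⟩ := hq; exact hmul g hg i
      | zero => simp
      | add p q _ _ hp hq => rw [mul_add]; exact add_mem hp hq
      | smul c p _ hp => rw [mul_smul_comm]; exact smul_mem _ _ hp
    | algebraMap r => intro p hp; rw [← Algebra.smul_def]; exact smul_mem _ _ hp
    | add a b _ _ ha hb => intro p hp; rw [add_mul]; exact add_mem (ha p hp) (hb p hp)
    | mul a b _ _ ha hb => intro p hp; rw [mul_assoc]; exact ha _ (hb p hp)
  exact eq_top_iff.mpr fun a _ => mul_one a ▸ mul_mem a 1 h1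

namespace Lam

/- The `Neg Lam` instance found by elaboration agrees with the one coming from `Ring Lam` only up
to unfolding, so `_root_.neg_mul` and `_root_.mul_neg` do not fire as rewrite rules on `Lam`. -/
theorem neg_mul (a b : Lam) : -a * b = -(a * b) := _root_.neg_mul a b
theorem mul_neg (a b : Lam) : a * -b = -(a * b) := _root_.mul_neg a b

theorem lx_mul_ly : lx * ly = -(ly * lx) := by
  have h := RingQuot.mkAlgHom_rel ℂ LamRel.r1
  simp only [map_add, map_mul, map_zero] at h
  exact eq_neg_of_add_eq_zero_left h

theorem lx_pow_three : lx ^ 3 = ly ^ 2 := by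
  simpa [sub_eq_zero] using RingQuot.mkAlgHom_rel ℂ LamRel.r2

theorem lx_mul_ly_mul (a : Lam) : lx * (ly * a) = -(ly * (lx * a)) := by
  rw [← mul_assoc, lx_mul_ly, neg_mul, mul_assoc]

theorem lx_mul_lx_mul_lx : lx * (lx * lx) = ly * ly := by
  simpa only [pow_succ, pow_zero, one_mul, mul_assoc] using lx_pow_three

theorem ly_pow_three : ly ^ 3 = 0 := by
  have h : ly ^ 3 = -ly ^ 3 :=
    calc ly ^ 3 = lx ^ 3 * ly := by rw [lx_pow_three, pow_succ]
      _ = -(ly * lx ^ 3) := by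
        simp only [pow_succ, pow_zero, one_mul, mul_assoc, lx_mul_ly, lx_mul_ly_mul, mul_neg,
          neg_neg]
      _ = -ly ^ 3 := by rw [lx_pow_three, ← pow_succ']
  have h2 : (2 : ℂ) • ly ^ 3 = 0 := by rw [two_smul]; nth_rw 2 [h]; exact add_neg_cancel _
  exact (smul_eq_zero.mp h2).resolve_left two_ne_zero

theorem ly_mul_ly_mul_ly : ly * (ly * ly) = 0 := by
  simpa only [pow_succ, pow_zero, one_mul, mul_assoc] using ly_pow_three

theorem ly_mul_ly_mul_ly_mul (a : Lam) : ly * (ly * (ly * a)) = 0 := by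
  rw [← mul_assoc, ← mul_assoc, mul_assoc ly, ly_mul_ly_mul_ly, zero_mul]

theorem adjoin_lx_ly : Algebra.adjoin ℂ {lx, ly} = ⊤ := by
  have : ({lx, ly} : Set Lam) = RingQuot.mkAlgHom ℂ LamRel '' Set.range (ι ℂ) := by
    rw [← Set.range_comp]; ext; simp [Fin.exists_fin_two, eq_comm]
  rw [this, Algebra.adjoin_image, FreeAlgebra.adjoin_range_ι, Algebra.map_top,
    AlgHom.range_eq_top]
  exact RingQuot.mkAlgHom_surjective ℂ LamRel

noncomputable def monomial : Fin 9 → Lam :=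
  ![1, ly, lx, ly ^ 2, ly * lx, lx ^ 2, ly ^ 2 * lx, ly * lx ^ 2, ly ^ 2 * lx ^ 2]

theorem range_monomial : Set.range monomial = {1, ly, lx, ly * ly, ly * lx, lx * lx,
    ly * (ly * lx), ly * (lx * lx), ly * (ly * (lx * lx))} := by
  simp only [monomial, Matrix.range_cons, Matrix.range_empty, Set.union_empty, Set.singleton_union,
    pow_two, mul_assoc]

theorem mul_monomial_mem_span (k : Fin 9) :
    lx * monomial k ∈ Submodule.span ℂ (Set.range monomial) ∧
    ly * monomial k ∈ Submodule.span ℂ (Set.range monomial) := by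
  rw [range_monomial]
  fin_cases k <;>
    simp only [monomial, Fin.zero_eta, Fin.mk_one, Fin.reduceFinMk, Matrix.cons_val, pow_two,
      mul_assoc, mul_one, mul_zero, lx_mul_ly, lx_mul_ly_mul, lx_mul_lx_mul_lx, ly_mul_ly_mul_ly,
      ly_mul_ly_mul_ly_mul, mul_neg, neg_neg, neg_zero] <;>
    refine ⟨?_, ?_⟩ <;>
    first
    | exact zero_mem _
    | (apply Submodule.subset_span; simp; done)
    | (apply neg_mem; apply Submodule.subset_span; simp)

theorem span_range_monomial : Submodule.span ℂ (Set.range monomial) = ⊤ :=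
  Submodule.span_range_eq_top_of_one_mem_of_mul_mem adjoin_lx_ly monomial
    (Submodule.subset_span ⟨0, rfl⟩)
    (by rintro g (rfl | rfl) k
        exacts [(mul_monomial_mem_span k).1, (mul_monomial_mem_span k).2])

/- Left multiplication by `x` and by `y` in the coordinates given by `monomial`, read off from the
products computed in `mul_monomial_mem_span`. -/
open LinearMap in
noncomputable def regularX : Module.End ℂ (Fin 9 → ℂ) :=
  pi ![0, 0, proj 0, proj 5, -proj 1, proj 2, proj 3, -proj 4, proj 6]

open LinearMap in
noncomputable def regularY : Module.End ℂ (Fin 9 → ℂ) :=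
  pi ![0, proj 0, 0, proj 1, proj 2, 0, proj 4, proj 5, proj 7]

theorem regularX_mul_regularY_add : regularX * regularY + regularY * regularX = 0 := by
  ext v i
  fin_cases i <;> simp [regularX, regularY]

theorem regularX_pow_three : regularX ^ 3 = regularY ^ 2 := by
  ext v i
  fin_cases i <;> simp [regularX, regularY, pow_succ]

noncomputable def regularRep : Lam →ₐ[ℂ] Module.End ℂ (Fin 9 → ℂ) :=
  RingQuot.liftAlgHom ℂ ⟨FreeAlgebra.lift ℂ ![regularX, regularY], fun _ _ h => by
    cases h
    · simpa using regularX_mul_regularY_add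
    · simpa [sub_eq_zero] using regularX_pow_three⟩

@[simp] theorem regularRep_lx : regularRep lx = regularX := by simp [regularRep]

@[simp] theorem regularRep_ly : regularRep ly = regularY := by simp [regularRep]

theorem regularRep_monomial_apply_single_zero (k : Fin 9) :
    regularRep (monomial k) (Pi.single 0 1) = Pi.single k 1 := by
  fin_cases k <;> ext i <;> fin_cases i <;> simp [monomial, pow_two, regularX, regularY]

theorem linearIndependent_monomial : LinearIndependent ℂ monomial := by
  refine LinearIndependent.of_comp (LinearMap.applyₗ (Pi.single 0 1) ∘ₗ regularRep.toLinearMap) ?_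
  convert (Pi.basisFun ℂ (Fin 9)).linearIndependent
  ext1 k
  simp [regularRep_monomial_apply_single_zero]

end Lam

theorem stmt3 :
    Module.finrank ℂ Lam = 9 ∧
    ∃ b : Module.Basis (Fin 9) ℂ Lam,
      ⇑b = ![1, ly, lx, ly ^ 2, ly * lx, lx ^ 2, ly ^ 2 * lx, ly * lx ^ 2,
            ly ^ 2 * lx ^ 2] := by
  let b := Module.Basis.mk Lam.linearIndependent_monomial Lam.span_range_monomial.ge
  exact ⟨by simpa using Module.finrank_eq_card_basis b, b, Module.Basis.coe_mk _ _⟩
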